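/- Let ψ be given on {z ∈ ℂⁿ : Re z ≤ 0} by the integral representation ψ(z) = c₀ + c₁·z + ∫_{ℝ₊ⁿ∖{0}} (e^{z·u} − 1) dμ(u), where c₀ ≤ 0, c₁ ∈ ℝ₊ⁿ, and μ is a positive measure on ℝ₊ⁿ∖{0} such that for sufficiently small δ > 0 the functions u ↦ u_j are μ-integrable on [0,δ)ⁿ∖{0} and μ(ℝ₊ⁿ∖[0,δ)ⁿ) < ∞. Then for all y ∈ ℝⁿ and all r, s ∈ (−∞,0)ⁿ one has Re ψ(s+iy) − ψ(s) ≥ 2(Re ψ(r+iy) − c₀ − c₁·r). -/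

import Mathlib

open MeasureTheory Filter Set

noncomputable section

/-- The open negative orthant `(-∞,0)^n`. -/
def negOrthant (n : ℕ) : Set (Fin n → ℝ) := {s | ∀ i, s i < 0}

/-- `f` is absolutely monotone on `(-∞,0)^n`: it is `C^∞` there and all its
iterated partial derivatives (of all orders, including order `0`) are nonnegative. -/
def AbsMono (n : ℕ) (f : (Fin n → ℝ) → ℝ) : Prop :=
  ContDiffOn ℝ (⊤ : ℕ∞) f (negOrthant n) ∧
  ∀ (k : ℕ) (m : Fin k → Fin n), ∀ x ∈ negOrthant n,
    0 ≤ iteratedFDerivWithin ℝ k f (negOrthant n) x (fun i => Pi.single (m i) 1)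

/-- `ψ` belongs to the class `T_n`: it is a nonpositive `C^∞` function on `(-∞,0)^n`
all of whose partial derivatives of every order `≥ 1` are nonnegative. -/
def MemT (n : ℕ) (ψ : (Fin n → ℝ) → ℝ) : Prop :=
  ContDiffOn ℝ (⊤ : ℕ∞) ψ (negOrthant n) ∧
  (∀ x ∈ negOrthant n, ψ x ≤ 0) ∧
  ∀ (k : ℕ) (m : Fin (k + 1) → Fin n), ∀ x ∈ negOrthant n,
    0 ≤ iteratedFDerivWithin ℝ (k + 1) ψ (negOrthant n) x (fun i => Pi.single (m i) 1)

/-- `ℝ₊ⁿ ∖ {0}`. -/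
def posPart (n : ℕ) : Set (Fin n → ℝ) := {u | (∀ i, 0 ≤ u i) ∧ u ≠ 0}

/-- `[0,δ)ⁿ ∖ {0}`. -/
def smallBox (n : ℕ) (δ : ℝ) : Set (Fin n → ℝ) := {u | (∀ i, 0 ≤ u i ∧ u i < δ) ∧ u ≠ 0}

/-- `ℝ₊ⁿ ∖ [0,δ)ⁿ`. -/
def farPart (n : ℕ) (δ : ℝ) : Set (Fin n → ℝ) := {u | (∀ i, 0 ≤ u i) ∧ ¬ ∀ i, u i < δ}

/-- The conditions on the representing measure: for sufficiently small `δ > 0`,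
the coordinate functions are integrable on `[0,δ)ⁿ ∖ {0}` and
`μ(ℝ₊ⁿ ∖ [0,δ)ⁿ) < ∞`. -/
def GoodMeasure (n : ℕ) (μ : Measure (Fin n → ℝ)) : Prop :=
  ∃ δ > (0:ℝ), (∀ j, IntegrableOn (fun u => u j) (smallBox n δ) μ) ∧ μ (farPart n δ) < ⊤

/-- `|e^w - 1| ≤ |w|` when `Re w ≤ 0`. -/
lemma aux_abs_exp_sub_one_le (w : ℂ) (hw : w.re ≤ 0) :
    ‖Complex.exp w - 1‖ ≤ ‖w‖ := by
  rw [Complex.norm_def, Complex.norm_def]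
  apply Real.sqrt_le_sqrt
  have hE : Real.exp w.re ≤ 1 := Real.exp_le_one_iff.2 hw
  have hE' : w.re + 1 ≤ Real.exp w.re := Real.add_one_le_exp w.re
  have hc : 1 - w.im ^ 2 / 2 ≤ Real.cos w.im := Real.one_sub_sq_div_two_le_cos
  have hc1 : Real.cos w.im ≤ 1 := Real.cos_le_one _
  have hsc : Real.sin w.im ^ 2 + Real.cos w.im ^ 2 = 1 := Real.sin_sq_add_cos_sq _
  have hE0 : 0 < Real.exp w.re := Real.exp_pos _
  simp only [Complex.normSq_apply, Complex.sub_re, Complex.sub_im, Complex.exp_re,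
    Complex.exp_im, Complex.one_re, Complex.one_im]
  nlinarith [sq_nonneg (Real.exp w.re - 1), sq_nonneg w.re, sq_nonneg w.im,
    mul_nonneg hE0.le (sub_nonneg.2 hc1)]

lemma aux_measurableSet_smallBox (n : ℕ) (δ : ℝ) : MeasurableSet (smallBox n δ) := by
  have : smallBox n δ = (⋂ i, {u : Fin n → ℝ | 0 ≤ u i ∧ u i < δ}) ∩ {(0 : Fin n → ℝ)}ᶜ := by
    ext u; simp [smallBox, Set.mem_iInter]
  rw [this]
  exact (MeasurableSet.iInter fun i =>
    ((measurableSet_le measurable_const (measurable_pi_apply i)).inter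
      (measurableSet_lt (measurable_pi_apply i) measurable_const))).inter
    (measurableSet_singleton 0).compl

lemma aux_measurableSet_farPart (n : ℕ) (δ : ℝ) : MeasurableSet (farPart n δ) := by
  have : farPart n δ = (⋂ i, {u : Fin n → ℝ | 0 ≤ u i}) ∩ (⋂ i, {u : Fin n → ℝ | u i < δ})ᶜ := by
    ext u; simp [farPart, Set.mem_iInter]
  rw [this]
  exact (MeasurableSet.iInter fun i =>
    measurableSet_le measurable_const (measurable_pi_apply i)).inter
    (MeasurableSet.iInter fun i =>
      measurableSet_lt (measurable_pi_apply i) measurable_const).compl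

lemma aux_measurableSet_posPart (n : ℕ) : MeasurableSet (posPart n) := by
  have : posPart n = (⋂ i, {u : Fin n → ℝ | 0 ≤ u i}) ∩ {(0 : Fin n → ℝ)}ᶜ := by
    ext u
    simp only [Set.mem_inter_iff, Set.mem_iInter, Set.mem_compl_iff, Set.mem_singleton_iff]
    exact Iff.rfl
  rw [this]
  exact (MeasurableSet.iInter fun i =>
    measurableSet_le measurable_const (measurable_pi_apply i)).inter
    (measurableSet_singleton 0).compl

lemma aux_re_sum_nonpos {n : ℕ} (z : Fin n → ℂ) (hz : ∀ j, (z j).re ≤ 0)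
    (u : Fin n → ℝ) (hu : ∀ i, 0 ≤ u i) : (∑ i, z i * (u i : ℂ)).re ≤ 0 := by
  rw [Complex.re_sum]
  apply Finset.sum_nonpos
  intro i _
  have : (z i * (u i : ℂ)).re = (z i).re * u i := by
    simp [Complex.mul_re]
  rw [this]
  exact mul_nonpos_of_nonpos_of_nonneg (hz i) (hu i)

lemma aux_integrable_key (n : ℕ) (μ : Measure (Fin n → ℝ)) (hμ : GoodMeasure n μ)
    (z : Fin n → ℂ) (hz : ∀ j, (z j).re ≤ 0) :
    IntegrableOn (fun u => Complex.exp (∑ i, z i * (u i : ℂ)) - 1) (posPart n) μ := by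
  obtain ⟨δ, hδ, hint, hfin⟩ := hμ
  have hcont : Continuous fun u : Fin n → ℝ => Complex.exp (∑ i, z i * (u i : ℂ)) - 1 := by
    fun_prop
  have hcover : posPart n ⊆ smallBox n δ ∪ farPart n δ := by
    intro u hu
    by_cases h : ∀ i, u i < δ
    · exact Or.inl ⟨fun i => ⟨hu.1 i, h i⟩, hu.2⟩
    · exact Or.inr ⟨hu.1, h⟩
  apply IntegrableOn.mono_set _ hcover
  apply IntegrableOn.union
  · have hdom : IntegrableOn (fun u => ∑ j, ‖z j‖ * u j) (smallBox n δ) μ :=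
      integrable_finset_sum _ (fun j _ => (hint j).const_mul _)
    apply Integrable.mono hdom hcont.aestronglyMeasurable.restrict
    apply ae_restrict_of_forall_mem (aux_measurableSet_smallBox n δ)
    intro u hu
    have hw : (∑ i, z i * (u i : ℂ)).re ≤ 0 :=
      aux_re_sum_nonpos z hz u (fun i => (hu.1 i).1)
    calc ‖Complex.exp (∑ i, z i * (u i : ℂ)) - 1‖
        ≤ ‖∑ i, z i * (u i : ℂ)‖ := aux_abs_exp_sub_one_le _ hw
      _ ≤ ∑ i, ‖z i * (u i : ℂ)‖ := norm_sum_le _ _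
      _ = ∑ i, ‖z i‖ * u i := by
          apply Finset.sum_congr rfl
          intro i _
          rw [norm_mul, Complex.norm_real, Real.norm_eq_abs, abs_of_nonneg (hu.1 i).1]
      _ ≤ ‖∑ i, ‖z i‖ * u i‖ := le_abs_self _
  · apply Measure.integrableOn_of_bounded hfin.ne hcont.aestronglyMeasurable (M := 2)
    apply ae_restrict_of_forall_mem (aux_measurableSet_farPart n δ)
    intro u hu
    have hw : (∑ i, z i * (u i : ℂ)).re ≤ 0 := aux_re_sum_nonpos z hz u hu.1
    calc ‖Complex.exp (∑ i, z i * (u i : ℂ)) - 1‖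
        ≤ ‖Complex.exp (∑ i, z i * (u i : ℂ))‖ + ‖(1:ℂ)‖ := norm_sub_le _ _
      _ ≤ 1 + 1 := by
          rw [Complex.norm_exp, norm_one]
          have := Real.exp_le_one_iff.2 hw
          linarith
      _ = 2 := by norm_num

lemma aux_sum_split (n : ℕ) (a b u : Fin n → ℝ) :
    (∑ i, ((a i : ℂ) + (b i : ℂ) * Complex.I) * (u i : ℂ))
      = ((∑ i, a i * u i : ℝ) : ℂ) + ((∑ i, b i * u i : ℝ) : ℂ) * Complex.I := by
  push_cast
  rw [Finset.sum_mul, ← Finset.sum_add_distrib]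
  apply Finset.sum_congr rfl
  intro i _
  ring

lemma aux_sum_real (n : ℕ) (a u : Fin n → ℝ) :
    (∑ i, (a i : ℂ) * (u i : ℂ)) = ((∑ i, a i * u i : ℝ) : ℂ) := by
  push_cast
  rfl

lemma aux_exp_re (a b : ℝ) :
    (Complex.exp (((a:ℝ):ℂ) + ((b:ℝ):ℂ) * Complex.I) - 1).re
      = Real.exp a * Real.cos b - 1 := by
  rw [Complex.sub_re, Complex.one_re, Complex.exp_re]
  simp

/-- key lemma: for `ψ` given on `{Re z ≤ 0}` by the integral
representation, `Re ψ(s+iy) − ψ(s) ≥ 2(Re ψ(r+iy) − c₀ − c₁·r)` for all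
`y ∈ ℝⁿ` and `r, s ∈ (−∞,0)ⁿ`. -/
theorem re_shift_inequality (n : ℕ) (c₀ : ℝ) (hc₀ : c₀ ≤ 0)
    (c₁ : Fin n → ℝ) (hc₁ : ∀ j, 0 ≤ c₁ j)
    (μ : Measure (Fin n → ℝ)) (hμ : GoodMeasure n μ) (hsupp : μ (posPart n)ᶜ = 0)
    (ψ : (Fin n → ℂ) → ℂ)
    (hrep : ∀ z : Fin n → ℂ, (∀ j, (z j).re ≤ 0) →
      ψ z = (c₀ : ℂ) + ∑ j, (c₁ j : ℂ) * z j +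
        ∫ u in posPart n, (Complex.exp (∑ i, z i * (u i : ℂ)) - 1) ∂μ) :
    ∀ (y : Fin n → ℝ), ∀ r ∈ negOrthant n, ∀ s ∈ negOrthant n,
      (ψ (fun j => (s j : ℂ) + (y j : ℂ) * Complex.I)).re -
        (ψ (fun j => (s j : ℂ))).re ≥
      2 * ((ψ (fun j => (r j : ℂ) + (y j : ℂ) * Complex.I)).re -
        c₀ - ∑ j, c₁ j * r j) := by
  intro y r hr s hs
  have hzS : ∀ j, (((fun j => (s j : ℂ) + (y j : ℂ) * Complex.I) : Fin n → ℂ) j).re ≤ 0 := by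
    intro j; simpa using (hs j).le
  have hzR : ∀ j, (((fun j => (r j : ℂ) + (y j : ℂ) * Complex.I) : Fin n → ℂ) j).re ≤ 0 := by
    intro j; simpa using (hr j).le
  have hzS0 : ∀ j, (((fun j => (s j : ℂ)) : Fin n → ℂ) j).re ≤ 0 := by
    intro j; simpa using (hs j).le
  rw [hrep _ hzS, hrep _ hzS0, hrep _ hzR]
  -- integrability
  have hIS := aux_integrable_key n μ hμ _ hzS
  have hIS0 := aux_integrable_key n μ hμ _ hzS0
  have hIR := aux_integrable_key n μ hμ _ hzR
  -- real parts of the integrals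
  have eIS : (∫ u in posPart n,
      (Complex.exp (∑ i, ((s i : ℂ) + (y i : ℂ) * Complex.I) * (u i : ℂ)) - 1) ∂μ).re
      = ∫ u in posPart n,
      (Complex.exp (∑ i, ((s i : ℂ) + (y i : ℂ) * Complex.I) * (u i : ℂ)) - 1).re ∂μ := by
    simpa using (integral_re hIS).symm
  have eIS0 : (∫ u in posPart n,
      (Complex.exp (∑ i, (s i : ℂ) * (u i : ℂ)) - 1) ∂μ).re
      = ∫ u in posPart n, (Complex.exp (∑ i, (s i : ℂ) * (u i : ℂ)) - 1).re ∂μ := by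
    simpa using (integral_re hIS0).symm
  have eIR : (∫ u in posPart n,
      (Complex.exp (∑ i, ((r i : ℂ) + (y i : ℂ) * Complex.I) * (u i : ℂ)) - 1) ∂μ).re
      = ∫ u in posPart n,
      (Complex.exp (∑ i, ((r i : ℂ) + (y i : ℂ) * Complex.I) * (u i : ℂ)) - 1).re ∂μ := by
    simpa using (integral_re hIR).symm
  -- real-part integrability
  have hISre : IntegrableOn (fun u =>
      (Complex.exp (∑ i, ((s i : ℂ) + (y i : ℂ) * Complex.I) * (u i : ℂ)) - 1).re)
      (posPart n) μ := hIS.re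
  have hIS0re : IntegrableOn (fun u =>
      (Complex.exp (∑ i, (s i : ℂ) * (u i : ℂ)) - 1).re) (posPart n) μ := hIS0.re
  have hIRre : IntegrableOn (fun u =>
      (Complex.exp (∑ i, ((r i : ℂ) + (y i : ℂ) * Complex.I) * (u i : ℂ)) - 1).re)
      (posPart n) μ := hIR.re
  -- the key integral inequality
  have key : 0 ≤ ∫ u in posPart n,
      ((Complex.exp (∑ i, ((s i : ℂ) + (y i : ℂ) * Complex.I) * (u i : ℂ)) - 1).re
        - (Complex.exp (∑ i, (s i : ℂ) * (u i : ℂ)) - 1).re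
        - 2 * (Complex.exp (∑ i, ((r i : ℂ) + (y i : ℂ) * Complex.I) * (u i : ℂ)) - 1).re) ∂μ := by
    apply setIntegral_nonneg (aux_measurableSet_posPart n)
    intro u hu
    have hup : ∀ i, 0 ≤ u i := hu.1
    rw [aux_sum_split n s y u, aux_sum_split n r y u, aux_sum_real n s u]
    rw [aux_exp_re, aux_exp_re]
    have hexp0 : (Complex.exp ((∑ i, s i * u i : ℝ) : ℂ) - 1).re
        = Real.exp (∑ i, s i * u i) - 1 := by
      rw [Complex.sub_re, Complex.one_re, Complex.exp_re, Complex.ofReal_re,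
        Complex.ofReal_im, Real.cos_zero, mul_one]
    rw [hexp0]
    have hp : (∑ i, s i * u i) ≤ 0 :=
      Finset.sum_nonpos fun i _ => mul_nonpos_of_nonpos_of_nonneg (hs i).le (hup i)
    have hq : (∑ i, r i * u i) ≤ 0 :=
      Finset.sum_nonpos fun i _ => mul_nonpos_of_nonpos_of_nonneg (hr i).le (hup i)
    set p := (∑ i, s i * u i)
    set q := (∑ i, r i * u i)
    set t := (∑ i, y i * u i)
    have ha1 : Real.exp p ≤ 1 := Real.exp_le_one_iff.2 hp
    have hb1 : Real.exp q ≤ 1 := Real.exp_le_one_iff.2 hq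
    have hb0 : 0 ≤ Real.exp q := (Real.exp_pos q).le
    have hc1 : Real.cos t ≤ 1 := Real.cos_le_one t
    have hc2 : -1 ≤ Real.cos t := Real.neg_one_le_cos t
    nlinarith [mul_nonneg (sub_nonneg.2 ha1) (sub_nonneg.2 hc1),
      mul_nonneg (sub_nonneg.2 hb1) (by linarith : (0:ℝ) ≤ 1 + Real.cos t),
      mul_nonneg hb0 (sub_nonneg.2 hc1)]
  have split : (∫ u in posPart n,
      ((Complex.exp (∑ i, ((s i : ℂ) + (y i : ℂ) * Complex.I) * (u i : ℂ)) - 1).re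
        - (Complex.exp (∑ i, (s i : ℂ) * (u i : ℂ)) - 1).re
        - 2 * (Complex.exp (∑ i, ((r i : ℂ) + (y i : ℂ) * Complex.I) * (u i : ℂ)) - 1).re) ∂μ)
      = (∫ u in posPart n,
          (Complex.exp (∑ i, ((s i : ℂ) + (y i : ℂ) * Complex.I) * (u i : ℂ)) - 1).re ∂μ)
        - (∫ u in posPart n, (Complex.exp (∑ i, (s i : ℂ) * (u i : ℂ)) - 1).re ∂μ)
        - 2 * (∫ u in posPart n,
          (Complex.exp (∑ i, ((r i : ℂ) + (y i : ℂ) * Complex.I) * (u i : ℂ)) - 1).re ∂μ) := by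
    have h1 : IntegrableOn (fun u =>
        (Complex.exp (∑ i, ((s i : ℂ) + (y i : ℂ) * Complex.I) * (u i : ℂ)) - 1).re
          - (Complex.exp (∑ i, (s i : ℂ) * (u i : ℂ)) - 1).re) (posPart n) μ :=
      hISre.sub hIS0re
    have h2 : IntegrableOn (fun u =>
        2 * (Complex.exp (∑ i, ((r i : ℂ) + (y i : ℂ) * Complex.I) * (u i : ℂ)) - 1).re)
        (posPart n) μ := hIRre.const_mul 2
    rw [integral_sub h1 h2, integral_sub hISre hIS0re, integral_const_mul]
  rw [split] at key
  -- now compute the real parts of the affine pieces and conclude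
  simp only [Complex.add_re]
  rw [eIS, eIS0, eIR]
  set AS := ∫ u in posPart n,
    (Complex.exp (∑ i, ((s i : ℂ) + (y i : ℂ) * Complex.I) * (u i : ℂ)) - 1).re ∂μ with hAS
  set AS0 := ∫ u in posPart n,
    (Complex.exp (∑ i, (s i : ℂ) * (u i : ℂ)) - 1).re ∂μ with hAS0
  set AR := ∫ u in posPart n,
    (Complex.exp (∑ i, ((r i : ℂ) + (y i : ℂ) * Complex.I) * (u i : ℂ)) - 1).re ∂μ with hAR
  simp only [Complex.ofReal_re, Complex.re_sum, Complex.mul_re, Complex.add_re,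
    Complex.add_im, Complex.ofReal_im, Complex.mul_im, Complex.I_re, Complex.I_im,
    mul_zero, zero_mul, mul_one, sub_zero, zero_add, add_zero]
  linarith [key]
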